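/- arXiv:1905.02915 — 3 statements merged into one kernel-verified Lean document; each statement's English description precedes it below -/
import Mathlib

section
/- Let ε > 0, Δt > 0, H > 0, and define the midpoint-upwind coefficients r⁻ = 2εΔt/(ĥ h), r⁰ = −(2εΔt/ĥ)(1/h + 1/H) − aΔt/H − b/2 − cΔt/2, r⁺ = 2εΔt/(ĥH) + aΔt/H − b/2 − cΔt/2, with ĥ = h + H, where a ≥ κ > 0, 0 < b ≤ B, 0 < c ≤ Γ. If (1/H)·κ ≥ (1/2)(B/Δt + Γ) + δ for some δ > 0 — in particular if H ≤ 2/N₀ where N₀κ ≥ B/Δt + Γ — then r⁻ > 0, r⁺ > 0 and |r⁻| + |r⁺| < |r⁰|. -/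
theorem midpoint_upwind_coeffs_M_matrix (ε Δt h H a b c κ B Γ δ : ℝ)
    (hε : 0 < ε) (hΔt : 0 < Δt) (hh : 0 < h) (hH : 0 < H)
    (hκ : 0 < κ) (ha : κ ≤ a)
    (hb0 : 0 < b) (hbB : b ≤ B)
    (hc0 : 0 < c) (hcΓ : c ≤ Γ)
    (hδ : 0 < δ)
    (hcond : (1 / H) * κ ≥ (1 / 2) * (B / Δt + Γ) + δ) :
    0 < 2 * ε * Δt / ((h + H) * h) ∧
    0 < 2 * ε * Δt / ((h + H) * H) + a * Δt / H - b / 2 - c * Δt / 2 ∧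
    |2 * ε * Δt / ((h + H) * h)|
      + |2 * ε * Δt / ((h + H) * H) + a * Δt / H - b / 2 - c * Δt / 2|
      < |-(2 * ε * Δt / (h + H)) * (1 / h + 1 / H) - a * Δt / H - b / 2 - c * Δt / 2| := by
  have hhH : 0 < h + H := by linarith
  have hrm : 0 < 2 * ε * Δt / ((h + H) * h) := by positivity
  have hp1 : 0 < 2 * ε * Δt / ((h + H) * H) := by positivity
  -- κ * Δt / H ≥ b/2 + c*Δt/2 + δ*Δt
  have hκH : κ * Δt / H ≥ B / 2 + Γ * Δt / 2 + δ * Δt := by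
    have h1 : (1 / H * κ) * Δt ≥ ((1 / 2) * (B / Δt + Γ) + δ) * Δt :=
      mul_le_mul_of_nonneg_right hcond hΔt.le
    have h2 : (1 / H * κ) * Δt = κ * Δt / H := by ring
    have h3 : ((1 / 2) * (B / Δt + Γ) + δ) * Δt = B / 2 + Γ * Δt / 2 + δ * Δt := by
      field_simp
    rw [h2, h3] at h1; exact h1
  have haH : a * Δt / H ≥ κ * Δt / H := by
    gcongr
  have hbc : a * Δt / H ≥ b / 2 + c * Δt / 2 + δ * Δt := by
    have : B / 2 + Γ * Δt / 2 ≥ b / 2 + c * Δt / 2 := by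
      have := mul_le_mul_of_nonneg_right hcΓ hΔt.le
      linarith
    linarith
  have hδΔt : 0 < δ * Δt := by positivity
  have ha0 : 0 < a * Δt / H := by have : 0 < a := lt_of_lt_of_le hκ ha; positivity
  have hcΔt : 0 < c * Δt := by positivity
  have hrp : 0 < 2 * ε * Δt / ((h + H) * H) + a * Δt / H - b / 2 - c * Δt / 2 := by
    linarith
  refine ⟨hrm, hrp, ?_⟩
  have key : -(2 * ε * Δt / (h + H)) * (1 / h + 1 / H)
      = -(2 * ε * Δt / ((h + H) * h)) - 2 * ε * Δt / ((h + H) * H) := by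
    field_simp; ring
  have hr0 : -(2 * ε * Δt / (h + H)) * (1 / h + 1 / H) - a * Δt / H - b / 2 - c * Δt / 2 < 0 := by
    rw [key]; linarith
  rw [abs_of_pos hrm, abs_of_pos hrp, abs_of_neg hr0, key]
  linarith
end

section
/- Discrete stability estimate: under the hypotheses of the discrete minimum principle for the operator L^{N,M}_ε with time-derivative coefficient b ≥ β > 0 and final time T, any mesh function W on the discretized domain satisfies |W(x_i,t_n)| ≤ max over boundary mesh points of |W| + (T/β)·max over interior mesh points of |L^{N,M}_ε W|. -/
/-- One time-step of the discrete maximum principle argument. -/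
lemma discrete_step (N : ℕ) (hN : 2 ≤ N) (Δt β : ℝ) (hΔt : 0 < Δt) (hβ : 0 < β)
    (rm r0 rp b : ℕ → ℝ) (hb : ∀ i, β ≤ b i)
    (hrm : ∀ i, 1 ≤ i → i ≤ N - 1 → 0 < rm i)
    (hrp : ∀ i, 1 ≤ i → i ≤ N - 1 → 0 < rp i)
    (hrow : ∀ i, 1 ≤ i → i ≤ N - 1 → rm i + r0 i + rp i + b i / Δt ≤ 0)
    (V Vp : ℕ → ℝ) (Bn F : ℝ) (hFpos : 0 ≤ F) (hBn : 0 ≤ Bn)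
    (h0 : V 0 ≤ Bn + (Δt / β) * F) (hNb : V N ≤ Bn + (Δt / β) * F)
    (hVp : ∀ i ≤ N, Vp i ≤ Bn)
    (hop : ∀ i, 1 ≤ i → i ≤ N - 1 →
      -F ≤ rm i * V (i - 1) + r0 i * V i + rp i * V (i + 1) + (b i / Δt) * Vp i) :
    ∀ i ≤ N, V i ≤ Bn + (Δt / β) * F := by
  obtain ⟨j, hjmem, hjmax⟩ := (Finset.range (N + 1)).exists_max_image V
    ⟨0, Finset.mem_range.2 (by omega)⟩
  have hjN : j ≤ N := by simpa using Nat.lt_succ_iff.mp (Finset.mem_range.mp hjmem)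
  have hjm : ∀ i ≤ N, V i ≤ V j := fun i hi =>
    hjmax i (Finset.mem_range.2 (by omega))
  intro i hi
  refine le_trans (hjm i hi) ?_
  by_contra hcon
  push_neg at hcon
  have hj0 : j ≠ 0 := by rintro rfl; exact absurd h0 (not_le.2 hcon)
  have hjNe : j ≠ N := by rintro rfl; exact absurd hNb (not_le.2 hcon)
  have h1j : 1 ≤ j := by omega
  have h2j : j ≤ N - 1 := by omega
  have hV1 : V (j - 1) ≤ V j := hjm _ (by omega)
  have hV2 : V (j + 1) ≤ V j := hjm _ (by omega)
  have hVpj : Vp j ≤ Bn := hVp j hjN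
  have hrmj := hrm j h1j h2j
  have hrpj := hrp j h1j h2j
  have hrowj := hrow j h1j h2j
  have hopj := hop j h1j h2j
  have hbj := hb j
  have hbΔ : 0 < b j / Δt := div_pos (lt_of_lt_of_le hβ hbj) hΔt
  have hm0 : 0 ≤ V j := le_trans (by positivity) hcon.le
  -- combine: -F ≤ (rm+r0+rp) * V j + (b/Δt) * Bn ≤ -(b/Δt)*V j + (b/Δt)*Bn
  have key : -F ≤ -(b j / Δt) * V j + (b j / Δt) * Bn := by
    have h1 : rm j * V (j - 1) ≤ rm j * V j := mul_le_mul_of_nonneg_left hV1 hrmj.le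
    have h2 : rp j * V (j + 1) ≤ rp j * V j := mul_le_mul_of_nonneg_left hV2 hrpj.le
    have h3 : (b j / Δt) * Vp j ≤ (b j / Δt) * Bn := mul_le_mul_of_nonneg_left hVpj hbΔ.le
    have h4 : (rm j + r0 j + rp j) * V j ≤ -(b j / Δt) * V j :=
      mul_le_mul_of_nonneg_right (by linarith) hm0
    have h5 : (rm j + r0 j + rp j) * V j = rm j * V j + r0 j * V j + rp j * V j := by ring
    linarith
  -- hence (b/Δt)*(V j - Bn) ≤ F, so V j ≤ Bn + (Δt/b)*F ≤ Bn + (Δt/β)*F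
  have hd : V j - Bn > (Δt / β) * F := by linarith
  have hdβ : (β / Δt) * (V j - Bn) > F := by
    have hβΔ : 0 < β / Δt := div_pos hβ hΔt
    have he : (β / Δt) * ((Δt / β) * F) = F := by field_simp
    have := mul_lt_mul_of_pos_left hd hβΔ
    linarith
  have h0' : 0 ≤ (Δt / β) * F := by positivity
  have hd0 : (0:ℝ) < V j - Bn := by linarith
  have hβb : β / Δt ≤ b j / Δt := (div_le_div_iff_of_pos_right hΔt).2 hbj
  have hbge : (β / Δt) * (V j - Bn) ≤ (b j / Δt) * (V j - Bn) :=
    mul_le_mul_of_nonneg_right hβb hd0.le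
  have hbF : (b j / Δt) * (V j - Bn) ≤ F := by
    have he : (b j / Δt) * (V j - Bn) = -(-(b j / Δt) * V j + (b j / Δt) * Bn) := by ring
    linarith
  linarith [hbge, hdβ, hbF]

theorem discrete_stability_estimate (N M : ℕ) (hN : 2 ≤ N) (hM : 1 ≤ M)
    (Δt T β : ℝ) (hΔt : 0 < Δt) (hβ : 0 < β) (hT : T = M * Δt)
    (rm r0 rp b : ℕ → ℕ → ℝ)
    (hb : ∀ i n, β ≤ b i n)
    (hrm : ∀ i n, 1 ≤ i → i ≤ N - 1 → 1 ≤ n → n ≤ M → 0 < rm i n)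
    (hrp : ∀ i n, 1 ≤ i → i ≤ N - 1 → 1 ≤ n → n ≤ M → 0 < rp i n)
    (hrow : ∀ i n, 1 ≤ i → i ≤ N - 1 → 1 ≤ n → n ≤ M →
      rm i n + r0 i n + rp i n + b i n / Δt ≤ 0)
    (W : ℕ → ℕ → ℝ) (Bd F : ℝ)
    (hleft : ∀ n ≤ M, |W 0 n| ≤ Bd) (hright : ∀ n ≤ M, |W N n| ≤ Bd)
    (hinit : ∀ i ≤ N, |W i 0| ≤ Bd)
    (hF : ∀ i n, 1 ≤ i → i ≤ N - 1 → 1 ≤ n → n ≤ M →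
      |rm i n * W (i - 1) n + r0 i n * W i n + rp i n * W (i + 1) n
        + (b i n / Δt) * W i (n - 1)| ≤ F) :
    ∀ i n, i ≤ N → n ≤ M → |W i n| ≤ Bd + (T / β) * F := by
  have hFpos : 0 ≤ F :=
    le_trans (abs_nonneg _) (hF 1 1 le_rfl (by omega) le_rfl hM)
  have hBd : 0 ≤ Bd := le_trans (abs_nonneg _) (hinit 0 (by omega))
  have key : ∀ n ≤ M, ∀ i ≤ N, |W i n| ≤ Bd + ((n * Δt) / β) * F := by
    intro n
    induction n with
    | zero =>
      intro _ i hi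
      have := hinit i hi
      simp only [Nat.cast_zero, zero_mul, zero_div, zero_mul, add_zero]
      exact this
    | succ n ih =>
      intro hn i hi
      have hn' : n ≤ M := by omega
      have ihs := ih hn'
      set Bn : ℝ := Bd + ((n * Δt) / β) * F with hBndef
      have hBn : 0 ≤ Bn := by positivity
      have hβ0 : β ≠ 0 := ne_of_gt hβ
      have hBnext : Bn + (Δt / β) * F = Bd + (((n : ℝ) + 1) * Δt) / β * F := by
        rw [hBndef]; field_simp
        ring
      have hBd_le : Bd ≤ Bn + (Δt / β) * F := by
        have : 0 ≤ ((n : ℝ) * Δt) / β * F := by positivity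
        have : 0 ≤ (Δt / β) * F := by positivity
        simp only [hBndef]; nlinarith [mul_nonneg (div_nonneg (mul_nonneg (Nat.cast_nonneg n) hΔt.le) hβ.le) hFpos]
      have habs : ∀ x : ℝ, x ≤ Bn + (Δt / β) * F → -x ≤ Bn + (Δt / β) * F →
          |x| ≤ Bn + (Δt / β) * F := fun x h1 h2 => abs_le.2 ⟨by linarith, h1⟩
      have hplus := discrete_step N hN Δt β hΔt hβ
        (fun i => rm i (n + 1)) (fun i => r0 i (n + 1)) (fun i => rp i (n + 1))
        (fun i => b i (n + 1)) (fun i => hb i (n + 1))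
        (fun i h1 h2 => hrm i (n + 1) h1 h2 (by omega) hn)
        (fun i h1 h2 => hrp i (n + 1) h1 h2 (by omega) hn)
        (fun i h1 h2 => hrow i (n + 1) h1 h2 (by omega) hn)
        (fun i => W i (n + 1)) (fun i => W i n) Bn F hFpos hBn
        (le_trans (le_abs_self _) (le_trans (hleft (n + 1) hn) hBd_le))
        (le_trans (le_abs_self _) (le_trans (hright (n + 1) hn) hBd_le))
        (fun i hiN => le_trans (le_abs_self _) (ihs i hiN))
        (fun i h1 h2 => by
          have := hF i (n + 1) h1 h2 (by omega) hn
          have h' := (abs_le.1 this).1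
          simpa using h')
      have hminus := discrete_step N hN Δt β hΔt hβ
        (fun i => rm i (n + 1)) (fun i => r0 i (n + 1)) (fun i => rp i (n + 1))
        (fun i => b i (n + 1)) (fun i => hb i (n + 1))
        (fun i h1 h2 => hrm i (n + 1) h1 h2 (by omega) hn)
        (fun i h1 h2 => hrp i (n + 1) h1 h2 (by omega) hn)
        (fun i h1 h2 => hrow i (n + 1) h1 h2 (by omega) hn)
        (fun i => -W i (n + 1)) (fun i => -W i n) Bn F hFpos hBn
        (le_trans (neg_le_abs _) (le_trans (hleft (n + 1) hn) hBd_le))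
        (le_trans (neg_le_abs _) (le_trans (hright (n + 1) hn) hBd_le))
        (fun i hiN => le_trans (neg_le_abs _) (ihs i hiN))
        (fun i h1 h2 => by
          have h' := (abs_le.1 (hF i (n + 1) h1 h2 (by omega) hn)).2
          have h'' : rm i (n + 1) * W (i - 1) (n + 1) + r0 i (n + 1) * W i (n + 1)
              + rp i (n + 1) * W (i + 1) (n + 1) + (b i (n + 1) / Δt) * W i n ≤ F := by
            simpa using h'
          show -F ≤ rm i (n + 1) * -W (i - 1) (n + 1) + r0 i (n + 1) * -W i (n + 1)
              + rp i (n + 1) * -W (i + 1) (n + 1) + (b i (n + 1) / Δt) * -W i n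
          have he : rm i (n + 1) * -W (i - 1) (n + 1) + r0 i (n + 1) * -W i (n + 1)
              + rp i (n + 1) * -W (i + 1) (n + 1) + (b i (n + 1) / Δt) * -W i n
              = -(rm i (n + 1) * W (i - 1) (n + 1) + r0 i (n + 1) * W i (n + 1)
              + rp i (n + 1) * W (i + 1) (n + 1) + (b i (n + 1) / Δt) * W i n) := by ring
          rw [he]
          linarith)
      rw [hBnext] at hplus hminus
      have h1 := hplus i hi
      have h2 := hminus i hi
      rw [abs_le]
      push_cast
      constructor <;> [skip; skip] <;> push_cast at h1 h2 <;> linarith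
  intro i n hi hn
  have h := key n hn i hi
  have hstep : ((n : ℝ) * Δt) / β * F ≤ (T / β) * F := by
    have hnM : (n : ℝ) ≤ M := by exact_mod_cast hn
    have : (n : ℝ) * Δt ≤ T := by rw [hT]; nlinarith
    have : ((n : ℝ) * Δt) / β ≤ T / β := (div_le_div_iff_of_pos_right hβ).2 this
    nlinarith
  linarith
end

section
/- Barrier bound for the singular component: let m = √γ and suppose z satisfies L_ε z = ε z_xx + a z_x − b z_t − c z with a ≥ 0, b ≥ β > 0, c ≥ γ > 0 on Q = (0,1)×(0,τ], with z = 0 on the bottom and right boundaries and |z(0,t)| ≤ C₀. Then the function ψ^±(x,t) = C exp(−m x/√ε) e^t ± z(x,t), for C ≥ C₀ sufficiently large, satisfies L_ε ψ^± ≤ 0 in Q; consequently |z(x,t)| ≤ C exp(−m x/√ε) on Q̄ for some constant C independent of ε. -/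
/-!
With `q = m / √ε`, the profile `B = exp (-q x) eᵗ` satisfies
`L_ε B = B (ε q² - a q - b - c) = B (γ - a q - b - c) ≤ 0`, so `ψ± = C₀ B ± z` are
supersolutions of `L_ε` that are nonnegative on the parabolic boundary (`B(0, t) = eᵗ ≥ 1`
takes care of the side `x = 0`). The minimum principle then gives `ψ± ≥ 0`: at a negative
minimum in the parabolic interior one would have `ψₓ = 0`, `ψₓₓ ≥ 0`, `ψₜ ≤ 0` and `-c ψ > 0`,
hence `L_ε ψ > 0`.
-/

open Set Filter Topology Real

theorem IsLocalMin.hasDerivAt_hasDerivAt_nonneg {f f' : ℝ → ℝ} {x₀ f'' : ℝ}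
    (h : IsLocalMin f x₀) (hf : ∀ᶠ x in 𝓝 x₀, HasDerivAt f (f' x) x)
    (hf' : HasDerivAt f' f'' x₀) : 0 ≤ f'' := by
  by_contra! hneg
  have hderiv : deriv f =ᶠ[𝓝 x₀] f' := hf.mono fun x hx => hx.deriv
  have hdd : deriv (deriv f) x₀ = f'' := hderiv.deriv_eq ▸ hf'.deriv
  -- By the second-derivative test `x₀` is also a local maximum, so `f` is locally constant.
  have hmax : IsLocalMax f x₀ :=
    isLocalMax_of_deriv_deriv_neg (hdd ▸ hneg) h.deriv_eq_zero hf.self_of_nhds.continuousAt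
  have hconst : f =ᶠ[𝓝 x₀] fun _ => f x₀ :=
    (h.and hmax).mono fun x hx => le_antisymm hx.2 hx.1
  have hf'_zero : f' =ᶠ[𝓝 x₀] fun _ => 0 :=
    (hconst.eventuallyEq_nhds.and hf).mono fun y ⟨hy, hfy⟩ =>
      hfy.unique ((hasDerivAt_const y (f x₀)).congr_of_eventuallyEq hy)
  have : f'' = 0 := hf'.unique ((hasDerivAt_const x₀ 0).congr_of_eventuallyEq hf'_zero)
  linarith

theorem IsMinOn.hasDerivAt_nonpos_of_mem_Ioc {f : ℝ → ℝ} {a b t f' : ℝ}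
    (h : IsMinOn f (Icc a b) t) (ht : t ∈ Ioc a b) (hf : HasDerivAt f f' t) : f' ≤ 0 := by
  have hcone : a - t ∈ posTangentConeAt (Icc a b) t := by
    apply sub_mem_posTangentConeAt_of_segment_subset
    rw [segment_symm, segment_eq_Icc ht.1.le]
    exact Icc_subset_Icc_right ht.2
  have := h.localize.hasFDerivWithinAt_nonneg hf.hasFDerivAt.hasFDerivWithinAt hcone
  simp only [ContinuousLinearMap.toSpanSingleton_apply, smul_eq_mul] at this
  exact nonpos_of_mul_nonneg_right this (sub_neg.2 ht.1)

def parabolicOp (ε a b c u ux uxx ut : ℝ) : ℝ :=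
  ε * uxx + a * ux - b * ut - c * u

theorem nonneg_of_parabolicOp_nonpos {ε x₁ x₂ t₁ t₂ : ℝ} {a b c ψ ψx ψxx ψt : ℝ → ℝ → ℝ}
    (hε : 0 ≤ ε) (hb : ∀ x t, 0 ≤ b x t) (hc : ∀ x t, 0 < c x t)
    (hψ : ContinuousOn (fun p : ℝ × ℝ => ψ p.1 p.2) (Icc x₁ x₂ ×ˢ Icc t₁ t₂))
    (hψx : ∀ x ∈ Ioo x₁ x₂, ∀ t ∈ Ioc t₁ t₂, HasDerivAt (ψ · t) (ψx x t) x)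
    (hψxx : ∀ x ∈ Ioo x₁ x₂, ∀ t ∈ Ioc t₁ t₂, HasDerivAt (ψx · t) (ψxx x t) x)
    (hψt : ∀ x ∈ Ioo x₁ x₂, ∀ t ∈ Ioc t₁ t₂, HasDerivAt (ψ x ·) (ψt x t) t)
    (hL : ∀ x ∈ Ioo x₁ x₂, ∀ t ∈ Ioc t₁ t₂,
      parabolicOp ε (a x t) (b x t) (c x t) (ψ x t) (ψx x t) (ψxx x t) (ψt x t) ≤ 0)
    (hbottom : ∀ x ∈ Icc x₁ x₂, 0 ≤ ψ x t₁) (hleft : ∀ t ∈ Icc t₁ t₂, 0 ≤ ψ x₁ t)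
    (hright : ∀ t ∈ Icc t₁ t₂, 0 ≤ ψ x₂ t) :
    ∀ x ∈ Icc x₁ x₂, ∀ t ∈ Icc t₁ t₂, 0 ≤ ψ x t := by
  intro x hx t ht
  obtain ⟨⟨x₀, t₀⟩, ⟨hx₀, ht₀⟩, hmin⟩ :=
    (isCompact_Icc.prod isCompact_Icc).exists_isMinOn ⟨(x, t), hx, ht⟩ hψ
  have hmin' : ∀ y ∈ Icc x₁ x₂, ∀ s ∈ Icc t₁ t₂, ψ x₀ t₀ ≤ ψ y s :=
    fun y hy s hs => hmin (show (y, s) ∈ _ from ⟨hy, hs⟩)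
  refine le_trans ?_ (hmin' x hx t ht)
  by_contra! hneg
  have hx₀' : x₀ ∈ Ioo x₁ x₂ := by
    refine ⟨hx₀.1.lt_of_ne ?_, hx₀.2.lt_of_ne ?_⟩ <;> rintro rfl
    · exact (hleft t₀ ht₀).not_gt hneg
    · exact (hright t₀ ht₀).not_gt hneg
  have ht₀' : t₀ ∈ Ioc t₁ t₂ := by
    refine ⟨ht₀.1.lt_of_ne ?_, ht₀.2⟩
    rintro rfl
    exact (hbottom x₀ hx₀).not_gt hneg
  have hlocal : IsLocalMin (ψ · t₀) x₀ :=
    mem_of_superset (Icc_mem_nhds hx₀'.1 hx₀'.2) fun y hy => hmin' y hy t₀ ht₀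
  have hψx₀ : ψx x₀ t₀ = 0 := hlocal.hasDerivAt_eq_zero (hψx x₀ hx₀' t₀ ht₀')
  have hψxx₀ : 0 ≤ ψxx x₀ t₀ :=
    hlocal.hasDerivAt_hasDerivAt_nonneg
      (mem_of_superset (Ioo_mem_nhds hx₀'.1 hx₀'.2) fun y hy => hψx y hy t₀ ht₀')
      (hψxx x₀ hx₀' t₀ ht₀')
  have hψt₀ : ψt x₀ t₀ ≤ 0 :=
    IsMinOn.hasDerivAt_nonpos_of_mem_Ioc (fun s hs => hmin' x₀ hx₀ s hs) ht₀'
      (hψt x₀ hx₀' t₀ ht₀')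
  have hL₀ := hL x₀ hx₀' t₀ ht₀'
  rw [parabolicOp, hψx₀] at hL₀
  nlinarith [mul_nonneg hε hψxx₀, mul_nonpos_of_nonneg_of_nonpos (hb x₀ t₀) hψt₀,
    mul_neg_of_pos_of_neg (hc x₀ t₀) hneg]

noncomputable def layerBarrier (m ε x t : ℝ) : ℝ :=
  exp (-(m * x) / √ε) * exp t

theorem layerBarrier_pos (m ε x t : ℝ) : 0 < layerBarrier m ε x t := by
  unfold layerBarrier; positivity

theorem hasDerivAt_layerBarrier_x (C m ε x t : ℝ) :
    HasDerivAt (fun y => C * layerBarrier m ε y t) (C * (-(m / √ε)) * layerBarrier m ε x t) x := by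
  have hexponent : HasDerivAt (fun y => -(m * y) / √ε) (-(m / √ε)) x := by
    simpa [neg_div] using ((hasDerivAt_id x).const_mul m).neg.div_const √ε
  exact ((hexponent.exp.mul_const (exp t)).const_mul C).congr_deriv (by unfold layerBarrier; ring)

theorem hasDerivAt_layerBarrier_xx {ε : ℝ} (hε : 0 ≤ ε) (C m x t : ℝ) :
    HasDerivAt (fun y => C * (-(m / √ε)) * layerBarrier m ε y t)
      (C * (m ^ 2 / ε) * layerBarrier m ε x t) x := by
  refine (hasDerivAt_layerBarrier_x (C * (-(m / √ε))) m ε x t).congr_deriv ?_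
  have hq : (m / √ε) ^ 2 = m ^ 2 / ε := by rw [div_pow, sq_sqrt hε]
  linear_combination C * layerBarrier m ε x t * hq

theorem hasDerivAt_layerBarrier_t (C m ε x t : ℝ) :
    HasDerivAt (fun s => C * layerBarrier m ε x s) (C * layerBarrier m ε x t) t := by
  simpa only [layerBarrier, mul_assoc] using ((hasDerivAt_exp t).const_mul (exp (-(m * x) / √ε))).const_mul C

theorem parabolicOp_barrier_nonpos {ε m a b c B : ℝ} (hε : 0 < ε) (hm : 0 ≤ m) (ha : 0 ≤ a)
    (hb : 0 ≤ b) (hc : m ^ 2 ≤ c) (hB : 0 ≤ B) :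
    parabolicOp ε a b c B (-(m / √ε) * B) (m ^ 2 / ε * B) B ≤ 0 := by
  have hdrift : 0 ≤ a * (m / √ε) := by positivity
  calc parabolicOp ε a b c B (-(m / √ε) * B) (m ^ 2 / ε * B) B
      = ((m ^ 2 - c) - a * (m / √ε) - b) * B := by
        unfold parabolicOp; field_simp; ring
    _ ≤ 0 := mul_nonpos_of_nonpos_of_nonneg (by linarith) hB

section Barrier

variable {ε m C₀ τ : ℝ} {a b c z zx zxx zt : ℝ → ℝ → ℝ}

theorem mul_layerBarrier_add_nonneg (hε : 0 < ε) (hm : 0 < m) (hC₀ : 0 ≤ C₀)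
    (ha : ∀ x t, 0 ≤ a x t) (hb : ∀ x t, 0 ≤ b x t) (hc : ∀ x t, m ^ 2 ≤ c x t)
    (hz : ContinuousOn (fun p : ℝ × ℝ => z p.1 p.2) (Icc 0 1 ×ˢ Icc 0 τ))
    (hzx : ∀ x ∈ Ioo (0 : ℝ) 1, ∀ t ∈ Ioc 0 τ, HasDerivAt (z · t) (zx x t) x)
    (hzxx : ∀ x ∈ Ioo (0 : ℝ) 1, ∀ t ∈ Ioc 0 τ, HasDerivAt (zx · t) (zxx x t) x)
    (hzt : ∀ x ∈ Ioo (0 : ℝ) 1, ∀ t ∈ Ioc 0 τ, HasDerivAt (z x ·) (zt x t) t)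
    (hLz : ∀ x ∈ Ioo (0 : ℝ) 1, ∀ t ∈ Ioc 0 τ,
      parabolicOp ε (a x t) (b x t) (c x t) (z x t) (zx x t) (zxx x t) (zt x t) ≤ 0)
    (hbottom : ∀ x ∈ Icc (0 : ℝ) 1, 0 ≤ z x 0) (hright : ∀ t ∈ Icc 0 τ, 0 ≤ z 1 t)
    (hleft : ∀ t ∈ Icc 0 τ, -C₀ ≤ z 0 t) :
    ∀ x ∈ Icc (0 : ℝ) 1, ∀ t ∈ Icc 0 τ, 0 ≤ C₀ * layerBarrier m ε x t + z x t := by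
  have hB : ∀ x t, 0 ≤ C₀ * layerBarrier m ε x t :=
    fun x t => mul_nonneg hC₀ (layerBarrier_pos m ε x t).le
  refine nonneg_of_parabolicOp_nonpos hε.le hb (fun x t => (pow_pos hm 2).trans_le (hc x t))
    (a := a) (ψx := fun x t => C₀ * (-(m / √ε)) * layerBarrier m ε x t + zx x t)
    (ψxx := fun x t => C₀ * (m ^ 2 / ε) * layerBarrier m ε x t + zxx x t)
    (ψt := fun x t => C₀ * layerBarrier m ε x t + zt x t) ?_
    (fun x hx t ht => (hasDerivAt_layerBarrier_x C₀ m ε x t).add (hzx x hx t ht))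
    (fun x hx t ht => (hasDerivAt_layerBarrier_xx hε.le C₀ m x t).add (hzxx x hx t ht))
    (fun x hx t ht => (hasDerivAt_layerBarrier_t C₀ m ε x t).add (hzt x hx t ht))
    (fun x hx t ht => ?_) (fun x hx => add_nonneg (hB x 0) (hbottom x hx)) (fun t ht => ?_)
    (fun t ht => add_nonneg (hB 1 t) (hright t ht))
  · exact (ContinuousOn.mul continuousOn_const (by unfold layerBarrier; fun_prop)).add hz
  · have hbarrier := parabolicOp_barrier_nonpos hε hm.le (ha x t) (hb x t) (hc x t) (hB x t)
    have hz := hLz x hx t ht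
    unfold parabolicOp at hbarrier hz ⊢
    linear_combination hbarrier + hz
  · have : C₀ ≤ C₀ * layerBarrier m ε 0 t := by
      simpa [layerBarrier] using le_mul_of_one_le_right hC₀ (one_le_exp ht.1)
    linarith [hleft t ht]

end Barrier

theorem singular_component_barrier_bound_general (ε τ β γ m C₀ : ℝ)
    (hε : 0 < ε) (hβ : 0 < β) (hγ : 0 < γ)
    (hm : m = Real.sqrt γ) (hC₀ : 0 ≤ C₀)
    (a b c z zx zxx zt : ℝ → ℝ → ℝ) (g : ℝ → ℝ → ℝ)
    (hg : ∀ x t, g x t = Real.exp (-(m * x) / Real.sqrt ε) * Real.exp t)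
    (ha : ∀ x t, 0 ≤ a x t) (hb : ∀ x t, β ≤ b x t) (hc : ∀ x t, γ ≤ c x t)
    (hz : ContinuousOn (fun p : ℝ × ℝ => z p.1 p.2)
      (Set.Icc 0 1 ×ˢ Set.Icc 0 τ))
    (hzx : ∀ x ∈ Set.Icc (0:ℝ) 1, ∀ t ∈ Set.Icc (0:ℝ) τ,
      HasDerivAt (fun y => z y t) (zx x t) x)
    (hzxx : ∀ x ∈ Set.Icc (0:ℝ) 1, ∀ t ∈ Set.Icc (0:ℝ) τ,
      HasDerivAt (fun y => zx y t) (zxx x t) x)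
    (hzt : ∀ x ∈ Set.Icc (0:ℝ) 1, ∀ t ∈ Set.Icc (0:ℝ) τ,
      HasDerivAt (fun s => z x s) (zt x t) t)
    (heq : ∀ x ∈ Set.Ioo (0:ℝ) 1, ∀ t ∈ Set.Ioc (0:ℝ) τ,
      ε * zxx x t + a x t * zx x t - b x t * zt x t - c x t * z x t = 0)
    (hbottom : ∀ x ∈ Set.Icc (0:ℝ) 1, z x 0 = 0)
    (hrightbd : ∀ t ∈ Set.Icc (0:ℝ) τ, z 1 t = 0)
    (hleftbd : ∀ t ∈ Set.Icc (0:ℝ) τ, |z 0 t| ≤ C₀) :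
    (∀ C, C₀ ≤ C → ∀ x ∈ Set.Ioo (0:ℝ) 1, ∀ t ∈ Set.Ioc (0:ℝ) τ,
      (ε * (C * (m ^ 2 / ε) * g x t + zxx x t)
        + a x t * (C * (-(m / Real.sqrt ε)) * g x t + zx x t)
        - b x t * (C * g x t + zt x t)
        - c x t * (C * g x t + z x t) ≤ 0) ∧
      (ε * (C * (m ^ 2 / ε) * g x t - zxx x t)
        + a x t * (C * (-(m / Real.sqrt ε)) * g x t - zx x t)
        - b x t * (C * g x t - zt x t)
        - c x t * (C * g x t - z x t) ≤ 0)) ∧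
    (∀ x ∈ Set.Icc (0:ℝ) 1, ∀ t ∈ Set.Icc (0:ℝ) τ,
      |z x t| ≤ C₀ * Real.exp (-(m * x) / Real.sqrt ε) * Real.exp τ) := by
  obtain rfl : g = layerBarrier m ε := funext₂ hg
  have hm₀ : 0 < m := hm ▸ sqrt_pos.2 hγ
  have hcm : ∀ x t, m ^ 2 ≤ c x t := by rwa [hm, sq_sqrt hγ.le]
  have hb₀ : ∀ x t, 0 ≤ b x t := fun x t => hβ.le.trans (hb x t)
  refine ⟨fun C hC x hx t ht => ?_, fun x hx t ht => ?_⟩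
  · have hbarrier := parabolicOp_barrier_nonpos hε hm₀.le (ha x t) (hb₀ x t) (hcm x t)
      (mul_nonneg (hC₀.trans hC) (layerBarrier_pos m ε x t).le)
    unfold parabolicOp at hbarrier
    exact ⟨by linear_combination hbarrier + heq x hx t ht,
      by linear_combination hbarrier - heq x hx t ht⟩
  have hzx' := fun x hx t ht => hzx x (Ioo_subset_Icc_self hx) t (Ioc_subset_Icc_self ht)
  have hzxx' := fun x hx t ht => hzxx x (Ioo_subset_Icc_self hx) t (Ioc_subset_Icc_self ht)
  have hzt' := fun x hx t ht => hzt x (Ioo_subset_Icc_self hx) t (Ioc_subset_Icc_self ht)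
  have hlower := mul_layerBarrier_add_nonneg hε hm₀ hC₀ ha hb₀ hcm hz hzx' hzxx' hzt'
    (fun x hx t ht => (heq x hx t ht).le) (fun x hx => (hbottom x hx).ge)
    (fun t ht => (hrightbd t ht).ge) (fun t ht => (abs_le.1 (hleftbd t ht)).1) x hx t ht
  have hupper := mul_layerBarrier_add_nonneg hε hm₀ hC₀ ha hb₀ hcm (z := fun x t => -z x t)
    (zx := fun x t => -zx x t) (zxx := fun x t => -zxx x t) (zt := fun x t => -zt x t) hz.neg
    (fun x hx t ht => (hzx' x hx t ht).neg) (fun x hx t ht => (hzxx' x hx t ht).neg)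
    (fun x hx t ht => (hzt' x hx t ht).neg)
    (fun x hx t ht => by unfold parabolicOp; linarith [heq x hx t ht])
    (fun x hx => by simp [hbottom x hx]) (fun t ht => by simp [hrightbd t ht])
    (fun t ht => by linarith [(abs_le.1 (hleftbd t ht)).2]) x hx t ht
  have hτ : C₀ * layerBarrier m ε x t ≤ C₀ * exp (-(m * x) / √ε) * exp τ := by
    rw [layerBarrier, ← mul_assoc]
    gcongr
    exact ht.2
  exact abs_le.2 ⟨by linarith, by linarith⟩

theorem singular_component_barrier_bound (ε τ β γ m C₀ : ℝ)
    (hε : 0 < ε) (hε1 : ε ≤ 1) (hτ : 0 < τ) (hβ : 0 < β) (hγ : 0 < γ)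
    (hm : m = Real.sqrt γ) (hC₀ : 0 ≤ C₀)
    (a b c z zx zxx zt : ℝ → ℝ → ℝ) (g : ℝ → ℝ → ℝ)
    (hg : ∀ x t, g x t = Real.exp (-(m * x) / Real.sqrt ε) * Real.exp t)
    (ha : ∀ x t, 0 ≤ a x t) (hb : ∀ x t, β ≤ b x t) (hc : ∀ x t, γ ≤ c x t)
    (hz : ContinuousOn (fun p : ℝ × ℝ => z p.1 p.2)
      (Set.Icc 0 1 ×ˢ Set.Icc 0 τ))
    (hzx : ∀ x ∈ Set.Icc (0:ℝ) 1, ∀ t ∈ Set.Icc (0:ℝ) τ,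
      HasDerivAt (fun y => z y t) (zx x t) x)
    (hzxx : ∀ x ∈ Set.Icc (0:ℝ) 1, ∀ t ∈ Set.Icc (0:ℝ) τ,
      HasDerivAt (fun y => zx y t) (zxx x t) x)
    (hzt : ∀ x ∈ Set.Icc (0:ℝ) 1, ∀ t ∈ Set.Icc (0:ℝ) τ,
      HasDerivAt (fun s => z x s) (zt x t) t)
    (heq : ∀ x ∈ Set.Ioo (0:ℝ) 1, ∀ t ∈ Set.Ioc (0:ℝ) τ,
      ε * zxx x t + a x t * zx x t - b x t * zt x t - c x t * z x t = 0)
    (hbottom : ∀ x ∈ Set.Icc (0:ℝ) 1, z x 0 = 0)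
    (hrightbd : ∀ t ∈ Set.Icc (0:ℝ) τ, z 1 t = 0)
    (hleftbd : ∀ t ∈ Set.Icc (0:ℝ) τ, |z 0 t| ≤ C₀) :
    (∀ C, C₀ ≤ C → ∀ x ∈ Set.Ioo (0:ℝ) 1, ∀ t ∈ Set.Ioc (0:ℝ) τ,
      (ε * (C * (m ^ 2 / ε) * g x t + zxx x t)
        + a x t * (C * (-(m / Real.sqrt ε)) * g x t + zx x t)
        - b x t * (C * g x t + zt x t)
        - c x t * (C * g x t + z x t) ≤ 0) ∧
      (ε * (C * (m ^ 2 / ε) * g x t - zxx x t)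
        + a x t * (C * (-(m / Real.sqrt ε)) * g x t - zx x t)
        - b x t * (C * g x t - zt x t)
        - c x t * (C * g x t - z x t) ≤ 0)) ∧
    (∀ x ∈ Set.Icc (0:ℝ) 1, ∀ t ∈ Set.Icc (0:ℝ) τ,
      |z x t| ≤ C₀ * Real.exp (-(m * x) / Real.sqrt ε) * Real.exp τ) :=
  singular_component_barrier_bound_general ε τ β γ m C₀ hε hβ hγ hm hC₀ a b c z zx zxx zt g hg ha hb
    hc hz hzx hzxx hzt heq hbottom hrightbd hleftbd
end
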